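/- For all n ∈ ℕ and all real z, ∏_{i=0}^{n-1}(x - i(z+i)) = ∑_{j=0}^{n} (-1)^{n-j} Jc_n^{(j)}(z) · x^j as polynomials in x. -/
import Mathlib

open Polynomial Finset

/-- The unsigned Jacobi-Stirling numbers of the first kind `Jc z n j = Jc_n^{(j)}(z)`,
defined by the recurrence `Jc_n^{(j)} = Jc_{n-1}^{(j-1)} + (n-1)(n-1+z) Jc_{n-1}^{(j)}`. -/
noncomputable def Jc (z : ℝ) : ℕ → ℕ → ℝ
  | 0, 0 => 1
  | 0, _ + 1 => 0
  | _ + 1, 0 => 0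
  | n + 1, j + 1 =>
      Jc z n j + (n : ℝ) * ((n : ℝ) + z) * Jc z n (j + 1)

lemma Jc_succ_zero (z : ℝ) (n : ℕ) : Jc z (n+1) 0 = 0 := rfl

lemma Jc_succ_succ (z : ℝ) (n j : ℕ) :
    Jc z (n+1) (j+1) = Jc z n j + (n : ℝ) * ((n : ℝ) + z) * Jc z n (j + 1) := rfl

lemma Jc_eq_zero (z : ℝ) : ∀ n j, n < j → Jc z n j = 0
  | 0, _+1, _ => rfl
  | n+1, j+1, h => by
      rw [Jc_succ_succ, Jc_eq_zero z n j (by omega), Jc_eq_zero z n (j+1) (by omega)]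
      ring

theorem prod_eq_sum_Jc (z : ℝ) (n : ℕ) :
    (∏ i ∈ Finset.range n,
        (Polynomial.X - Polynomial.C ((i : ℝ) * (z + (i : ℝ)))) : Polynomial ℝ) =
      ∑ j ∈ Finset.range (n + 1),
        Polynomial.C ((-1 : ℝ) ^ (n - j) * Jc z n j) * Polynomial.X ^ j := by
  induction n with
  | zero => simp [Jc]
  | succ n ih =>
    rw [Finset.prod_range_succ, ih, mul_sub, Finset.sum_mul, Finset.sum_mul]
    rw [Finset.sum_range_succ' (fun j => C ((-1:ℝ)^(n+1-j) * Jc z (n+1) j) * X ^ j)]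
    simp only [Jc_succ_zero, Nat.succ_sub_succ, Jc_succ_succ, mul_zero, zero_mul, add_zero,
      pow_zero, mul_one, map_zero]
    have key : ∀ j ∈ Finset.range (n+1),
        C ((-1:ℝ)^(n-j) * (Jc z n j + (n:ℝ)*((n:ℝ)+z)*Jc z n (j+1))) * X ^ (j+1)
        = C ((-1:ℝ)^(n-j) * Jc z n j) * X ^ j * X
          + C ((-1:ℝ)^(n-j) * ((n:ℝ)*((n:ℝ)+z)) * Jc z n (j+1)) * X ^ (j+1) := by
      intro j _
      rw [pow_succ, mul_add, map_add]
      ring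
    rw [Finset.sum_congr rfl key, Finset.sum_add_distrib]
    have h2 : ∑ j ∈ Finset.range (n+1),
        C ((-1:ℝ)^(n-j) * ((n:ℝ)*((n:ℝ)+z)) * Jc z n (j+1)) * X ^ (j+1)
        = - ∑ j ∈ Finset.range (n+1),
            C ((-1:ℝ)^(n-j) * Jc z n j) * X ^ j * C ((n:ℝ)*(z+(n:ℝ))) := by
      rw [Finset.sum_range_succ (fun j => C ((-1:ℝ)^(n-j) * ((n:ℝ)*((n:ℝ)+z)) * Jc z n (j+1)) * X ^ (j+1))]
      rw [Jc_eq_zero z n (n+1) (by omega)]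
      rw [Finset.sum_range_succ' (fun j => C ((-1:ℝ)^(n-j) * Jc z n j) * X ^ j * C ((n:ℝ)*(z+(n:ℝ))))]
      simp only [mul_zero, zero_mul, map_zero, add_zero, pow_zero, mul_one, Nat.sub_self,
        Nat.sub_zero]
      have h0 : C ((-1:ℝ)^n * Jc z n 0) * C ((n:ℝ)*(z+(n:ℝ))) = 0 := by
        cases n with
        | zero => simp
        | succ m => simp [Jc_succ_zero]
      rw [h0, add_zero, ← Finset.sum_neg_distrib]
      refine Finset.sum_congr rfl fun j hj => ?_
      have hj' : j < n := Finset.mem_range.mp hj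
      have hnj : n - j = (n - (j+1)) + 1 := by omega
      rw [hnj, pow_succ]
      have hr : ∀ a c : ℝ, -(C a * (X:ℝ[X])^(j+1) * C c) = C (-(a*c)) * X^(j+1) := by
        intro a c; rw [map_neg, map_mul]; ring
      rw [hr]
      congr 1
      ring
    rw [h2]
    ring
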